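/- arXiv:2603.16187 — 2 statements merged into one kernel-verified Lean document; each statement's English description precedes it below -/
import Mathlib

section
/- Assume gcd(3k, q) = 1 and q−1 ∉ {k, 2k, 3k}, and let β = (α_1,…,α_k, γ·α_1,…,γ·α_k, γ²·α_1,…,γ²·α_k) ∈ F_q^{3k} (so n = 3k; its entries are pairwise distinct). If 2ℓ < k, or if k = 2ℓ and (k : F_q)·(1 + γ^k + γ^{2k}) + Σ_{i=1}^{ℓ} a_{1i}² ≠ 0 in F_q, then the GRL code GRL_k(β, A) is Euclidean LCD. -/
open Matrix BigOperators Finset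

/-- Euclidean dual of a code `C ⊆ F^ι`. -/
def dualE {F : Type} [Field F] {ι : Type} [Fintype ι] (C : Submodule F (ι → F)) :
    Submodule F (ι → F) where
  carrier := {x | ∀ y ∈ C, ∑ i, x i * y i = 0}
  add_mem' := by
    intro a b ha hb y hy
    have h : ∑ i, (a + b) i * y i = (∑ i, a i * y i) + ∑ i, b i * y i := by
      rw [← Finset.sum_add_distrib]
      exact Finset.sum_congr rfl fun i _ => add_mul _ _ _
    rw [h, ha y hy, hb y hy, add_zero]
  zero_mem' := by intro y hy; simp
  smul_mem' := by
    intro c a ha y hy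
    have h : ∑ i, (c • a) i * y i = c * ∑ i, a i * y i := by
      rw [Finset.mul_sum]
      exact Finset.sum_congr rfl fun i _ => by
        simp [Pi.smul_apply, smul_eq_mul, mul_assoc]
    rw [h, ha y hy, mul_zero]

/-- Generator matrix of the generalized Roth–Lempel code: evaluation columns indexed by `ι`
(entry `β j ^ r`), extra columns indexed by `Fin ℓ` (zero for rows `r < k - ℓ`, and the
corresponding row of `A` for rows `k - ℓ ≤ r ≤ k - 1`). -/
def GRLmatrix {F : Type} [Field F] (k ℓ : ℕ) (hℓk : ℓ ≤ k) {ι : Type} (β : ι → F)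
    (A : Matrix (Fin ℓ) (Fin ℓ) F) : Matrix (Fin k) (ι ⊕ Fin ℓ) F :=
  fun r => Sum.elim (fun j => β j ^ (r : ℕ))
    (fun j' => if _h : (r : ℕ) < k - ℓ then 0
      else A ⟨(r : ℕ) - (k - ℓ), by have := r.isLt; omega⟩ j')

/-- The generalized Roth–Lempel code: the row span of `GRLmatrix`. -/
def GRLcode {F : Type} [Field F] (k ℓ : ℕ) (hℓk : ℓ ≤ k) {ι : Type} (β : ι → F)
    (A : Matrix (Fin ℓ) (Fin ℓ) F) : Submodule F ((ι ⊕ Fin ℓ) → F) :=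
  Submodule.span F (Set.range (GRLmatrix k ℓ hℓk β A))

/-!
A vector `v = x ᵥ* G` in `C ∩ C⊥` satisfies `x ᵥ* (G * Gᵀ) = 0`, so it suffices that the Gram
matrix `G * Gᵀ` is nonsingular. Its `(r, s)` entry is the power sum `∑ β_j ^ (r + s)` plus, when
`r` and `s` are both among the last `ℓ` rows, an entry of `A * Aᵀ`. The entries of `β` are the `k`-th roots
of unity times `1, γ, γ²`, so the power sum is `(1 + γ^e + γ^(2e)) k` when `k ∣ e` and `0`
otherwise. The hypotheses make `3k`, `k (1 + γ^k + γ^(2k))` and, when `k = 2ℓ`, the corner entry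
nonzero, and then the Gram matrix with its columns permuted by `s ↦ -s (mod k)` is lower
triangular with nonzero diagonal.
-/

theorem span_range_inf_dualE_eq_bot {F : Type} [Field F] {κ ι : Type} [Fintype κ]
    [DecidableEq κ] [Fintype ι] (G : Matrix κ ι F) (hG : (G * Gᵀ).det ≠ 0) :
    Submodule.span F (Set.range G) ⊓ dualE (Submodule.span F (Set.range G)) = ⊥ := by
  refine eq_bot_iff.mpr fun v ⟨hv, hvperp⟩ => ?_
  obtain ⟨x, rfl⟩ := (Submodule.mem_span_range_iff_exists_fun F).mp hv
  have hGx : (∑ r, x r • G r) ᵥ* Gᵀ = 0 := funext fun s =>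
    hvperp (G s) (Submodule.subset_span ⟨s, rfl⟩)
  rw [← vecMul_eq_sum, vecMul_vecMul] at hGx
  rw [eq_zero_of_vecMul_eq_zero hG hGx]
  simp

theorem det_ne_zero_of_permuted_lowerTriangular {F : Type} [Field F] {n : Type} [Fintype n]
    [DecidableEq n] [LinearOrder n] (M : Matrix n n F) (σ : Equiv.Perm n)
    (hlower : ∀ r t, r < t → M r (σ t) = 0) (hdiag : ∀ t, M t (σ t) ≠ 0) : M.det ≠ 0 := by
  have hN : (M.submatrix id σ).det ≠ 0 := by
    rw [det_of_isLowerTriangular (M.submatrix id σ) fun r t h =>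
      hlower r t (OrderDual.toDual_lt_toDual.mp h)]
    exact Finset.prod_ne_zero_iff.mpr fun t _ => hdiag t
  rw [det_permute'] at hN
  exact right_ne_zero_of_mul hN

theorem IsPrimitiveRoot.sum_pow_pow_succ {F : Type} [Field F] {ζ : F} {k : ℕ}
    (hζ : IsPrimitiveRoot ζ k) (e : ℕ) :
    ∑ i : Fin k, (ζ ^ ((i : ℕ) + 1)) ^ e = if k ∣ e then (k : F) else 0 := by
  have hx : ∀ i : ℕ, (ζ ^ (i + 1)) ^ e = ζ ^ e * (ζ ^ e) ^ i := fun i => by ring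
  simp_rw [hx, Fin.sum_univ_eq_sum_range (fun i => ζ ^ e * (ζ ^ e) ^ i), ← Finset.mul_sum]
  split_ifs with hke
  · simp [(hζ.pow_eq_one_iff_dvd e).mpr hke]
  · have hpow : (ζ ^ e) ^ k = 1 := by rw [← pow_mul, mul_comm, pow_mul, hζ.pow_eq_one, one_pow]
    rw [geom_sum_eq ((hζ.pow_eq_one_iff_dvd e).not.mpr hke), hpow]
    simp

theorem natCast_ne_zero_of_coprime_card {F : Type} [Field F] [Fintype F] {n : ℕ}
    (hn : Nat.Coprime n (Fintype.card F)) : (n : F) ≠ 0 := by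
  intro h
  have hchar : ringChar F ∣ Nat.gcd n (Fintype.card F) :=
    Nat.dvd_gcd ((ringChar.spec F n).mp h)
      ((ringChar.spec F _).mp (FiniteField.cast_card_eq_zero F))
  rw [hn, Nat.dvd_one] at hchar
  exact (CharP.char_is_prime F (ringChar F)).one_lt.ne' hchar

theorem IsPrimitiveRoot.one_add_self_add_sq_ne_zero {F : Type} [Field F] {ω : F} {d : ℕ}
    (hω : IsPrimitiveRoot ω d) (h1 : d ≠ 1) (h3 : d ≠ 3) : 1 + ω + ω ^ 2 ≠ 0 := by
  intro h
  have hcube : ω ^ 3 = 1 := by linear_combination (ω - 1) * h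
  have hd : d ∣ 3 := hω.dvd_of_pow_eq_one 3 hcube
  rcases (Nat.dvd_prime Nat.prime_three).mp hd with hd | hd <;> contradiction

theorem sum_pow_eq_of_cosets {F : Type} [Field F] {ζ ω : F} {k m : ℕ} (hζ : IsPrimitiveRoot ζ k)
    (β : Fin m × Fin k → F) (hβ : ∀ j, β j = ω ^ (j.1 : ℕ) * ζ ^ ((j.2 : ℕ) + 1)) (e : ℕ) :
    ∑ j, β j ^ e = (∑ t : Fin m, ω ^ ((t : ℕ) * e)) * if k ∣ e then (k : F) else 0 := by
  simp_rw [Fintype.sum_prod_type, hβ, mul_pow, ← Finset.mul_sum, hζ.sum_pow_pow_succ,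
    Finset.sum_mul, pow_mul]

section GRL

variable {F : Type} [Field F] {k ℓ : ℕ} (hℓk : ℓ ≤ k) {ι : Type} (β : ι → F)
  (A : Matrix (Fin ℓ) (Fin ℓ) F)

theorem GRLmatrix_inr_of_lt {r : Fin k} (hr : (r : ℕ) < k - ℓ) (j : Fin ℓ) :
    GRLmatrix k ℓ hℓk β A r (Sum.inr j) = 0 := by
  simp [GRLmatrix, hr]

theorem GRLmatrix_inr_of_eq (hℓ : 0 < ℓ) {r : Fin k} (hr : (r : ℕ) = k - ℓ) (j : Fin ℓ) :
    GRLmatrix k ℓ hℓk β A r (Sum.inr j) = A ⟨0, hℓ⟩ j := by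
  simp [GRLmatrix, hr]

theorem GRLmatrix_mul_transpose_apply [Fintype ι] (r s : Fin k) :
    (GRLmatrix k ℓ hℓk β A * (GRLmatrix k ℓ hℓk β A)ᵀ) r s = ∑ j, β j ^ ((r : ℕ) + s) +
      ∑ j, GRLmatrix k ℓ hℓk β A r (Sum.inr j) * GRLmatrix k ℓ hℓk β A s (Sum.inr j) := by
  simp [mul_apply, Fintype.sum_sum_type, GRLmatrix, pow_add]

theorem GRLmatrix_mul_transpose_apply_of_lt [Fintype ι] {r s : Fin k}
    (h : (r : ℕ) < k - ℓ ∨ (s : ℕ) < k - ℓ) :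
    (GRLmatrix k ℓ hℓk β A * (GRLmatrix k ℓ hℓk β A)ᵀ) r s = ∑ j, β j ^ ((r : ℕ) + s) := by
  rw [GRLmatrix_mul_transpose_apply, add_eq_left]
  refine Finset.sum_eq_zero fun j _ => ?_
  rcases h with h | h <;> simp [GRLmatrix_inr_of_lt hℓk β A h]

theorem GRLcode_inf_dualE_eq_bot [Fintype ι] (hℓ : 0 < ℓ)
    (hcard : (Fintype.card ι : F) ≠ 0) (hvanish : ∀ e, 0 < e → e < k → ∑ j, β j ^ e = 0)
    (hk : ∑ j, β j ^ k ≠ 0)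
    (hcase : 2 * ℓ < k ∨ (k = 2 * ℓ ∧ ∑ j, β j ^ k + ∑ i, A ⟨0, hℓ⟩ i ^ 2 ≠ 0)) :
    GRLcode k ℓ hℓk β A ⊓ dualE (GRLcode k ℓ hℓk β A) = ⊥ := by
  have h2ℓ : 2 * ℓ ≤ k := by omega
  have : NeZero k := ⟨by omega⟩
  have hneg : ∀ t : Fin k, t ≠ 0 → ((-t : Fin k) : ℕ) = k - t := fun t ht => by
    rw [Fin.val_neg, if_neg ht]
  refine span_range_inf_dualE_eq_bot _ (det_ne_zero_of_permuted_lowerTriangular _ (Equiv.neg _)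
    (fun r t hrt => ?_) (fun t => ?_))
  · have ht : t ≠ 0 := (Fin.zero_le r).trans_lt hrt |>.ne'
    have hrt' : (r : ℕ) < t := hrt
    have htk : (t : ℕ) < k := t.isLt
    have hs := hneg t ht
    rw [Equiv.neg_apply, GRLmatrix_mul_transpose_apply_of_lt _ _ _ (by omega), hs]
    exact hvanish _ (by omega) (by omega)
  rw [Equiv.neg_apply]
  by_cases ht : t = 0
  · subst ht
    rw [neg_zero, GRLmatrix_mul_transpose_apply_of_lt _ _ _ (by simp; omega)]
    simpa using hcard
  have htk : (t : ℕ) < k := t.isLt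
  have hs := hneg t ht
  have hsum : (t : ℕ) + (-t : Fin k) = k := by omega
  by_cases hcorner : (t : ℕ) < k - ℓ ∨ ((-t : Fin k) : ℕ) < k - ℓ
  · rwa [GRLmatrix_mul_transpose_apply_of_lt _ _ _ hcorner, hsum]
  obtain ⟨-, hcorner_ne⟩ := hcase.resolve_left (by omega)
  rw [GRLmatrix_mul_transpose_apply, hsum]
  simp_rw [GRLmatrix_inr_of_eq hℓk β A hℓ (r := t) (by omega),
    GRLmatrix_inr_of_eq hℓk β A hℓ (r := -t) (by omega), ← sq]
  exact hcorner_ne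

end GRL

/-- with `gcd(3k, q) = 1`, `q - 1 ∉ {k, 2k, 3k}` and
`β = (α_1,…,α_k, γ·α_1,…,γ·α_k, γ²·α_1,…,γ²·α_k)`, if `2ℓ < k`, or `k = 2ℓ` and
`k·(1 + γ^k + γ^{2k}) + Σ a_{1i}² ≠ 0`, then the GRL code is Euclidean LCD. -/
theorem stmt7 {F : Type} [Field F] [Fintype F]
    (γ : Fˣ) (hγ : ∀ x : Fˣ, x ∈ Subgroup.zpowers γ)
    (k ℓ : ℕ) (hℓ2 : 2 ≤ ℓ) (hℓk : ℓ ≤ k) (hkdvd : k ∣ Fintype.card F - 1)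
    (A : Matrix (Fin ℓ) (Fin ℓ) F)
    (α : Fin k → F)
    (hα : ∀ i : Fin k, α i = (γ : F) ^ ((Fintype.card F - 1) / k * ((i : ℕ) + 1)))
    (hgcd : Nat.gcd (3 * k) (Fintype.card F) = 1)
    (hne1 : Fintype.card F - 1 ≠ k)
    (hne3 : Fintype.card F - 1 ≠ 3 * k)
    (β : (Fin 3 × Fin k) → F)
    (hβ : ∀ j : Fin 3 × Fin k, β j = (γ : F) ^ (j.1 : ℕ) * α j.2)
    (hcase : 2 * ℓ < k ∨
      (k = 2 * ℓ ∧ (k : F) * (1 + (γ : F) ^ k + (γ : F) ^ (2 * k)) +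
        ∑ i : Fin ℓ, A ⟨0, by omega⟩ i ^ 2 ≠ 0)) :
    GRLcode k ℓ hℓk β A ⊓ dualE (GRLcode k ℓ hℓk β A) = ⊥ := by
  have hprim : IsPrimitiveRoot (γ : F) (Fintype.card F - 1) := by
    rw [IsPrimitiveRoot.iff_orderOf, orderOf_units, orderOf_eq_card_of_forall_mem_zpowers hγ,
      Nat.card_units, Nat.card_eq_fintype_card]
  have hq : 0 < Fintype.card F - 1 := Nat.sub_pos_of_lt Fintype.one_lt_card
  obtain ⟨d, hd⟩ := hkdvd
  rw [hd, Nat.mul_div_cancel_left d (by omega)] at hα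
  have hcosets := sum_pow_eq_of_cosets (hprim.pow hq (hd.trans (mul_comm k d)))
    β (fun j => by rw [hβ, hα, pow_mul])
  have hpowk : ∑ j, β j ^ k = k * (1 + (γ : F) ^ k + (γ : F) ^ (2 * k)) := by
    rw [hcosets, if_pos dvd_rfl, Fin.sum_univ_three]
    simp only [Fin.val_zero, Fin.val_one, Fin.val_two, zero_mul, one_mul, pow_zero]
    ring
  have hω : 1 + (γ : F) ^ k + (γ : F) ^ (2 * k) ≠ 0 := by
    rw [mul_comm 2 k, pow_mul]
    exact (hprim.pow hq hd).one_add_self_add_sq_ne_zero (by rintro rfl; omega)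
      (by rintro rfl; omega)
  have hk : (k : F) ≠ 0 :=
    natCast_ne_zero_of_coprime_card (Nat.Coprime.coprime_dvd_left (dvd_mul_left k 3) hgcd)
  refine GRLcode_inf_dualE_eq_bot hℓk β A (by omega) ?_ (fun e he hek => ?_) ?_
    (by rwa [hpowk])
  · simpa using natCast_ne_zero_of_coprime_card hgcd
  · rw [hcosets, if_neg (Nat.not_dvd_of_pos_of_lt he hek), mul_zero]
  · rw [hpowk]
    exact mul_ne_zero hk hω
end

section
/- Assume k ∣ q−1, let δ be an integer with 1 ≤ δ ≤ q²−1, and let β = (γ^δ·α_1, …, γ^δ·α_k) ∈ F_{q²}^k (so n = k). If k = 2ℓ and (k : F_{q²})·γ^{δ(k−ℓ+ℓq)} + Σ_{i=1}^{ℓ} a_{1i}^{1+q} = 0 in F_{q²}, then the Hermitian hull of GRL_k(β, A) has F_{q²}-dimension exactly 1. -/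
open Matrix BigOperators Finset

/-- Hermitian dual (with respect to `x ↦ x ^ q`) of a code `C ⊆ F^ι`. -/
def dualH {F : Type} [Field F] (q : ℕ) {ι : Type} [Fintype ι] (C : Submodule F (ι → F)) :
    Submodule F (ι → F) where
  carrier := {x | ∀ y ∈ C, ∑ i, x i * y i ^ q = 0}
  add_mem' := by
    intro a b ha hb y hy
    have h : ∑ i, (a + b) i * y i ^ q = (∑ i, a i * y i ^ q) + ∑ i, b i * y i ^ q := by
      rw [← Finset.sum_add_distrib]
      exact Finset.sum_congr rfl fun i _ => add_mul _ _ _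
    rw [h, ha y hy, hb y hy, add_zero]
  zero_mem' := by intro y hy; simp
  smul_mem' := by
    intro c a ha y hy
    have h : ∑ i, (c • a) i * y i ^ q = c * ∑ i, a i * y i ^ q := by
      rw [Finset.mul_sum]
      exact Finset.sum_congr rfl fun i _ => by
        simp [Pi.smul_apply, smul_eq_mul, mul_assoc]
    rw [h, ha y hy, mul_zero]

/-!
Let `M = G (G^{(q)})ᵀ` be the Hermitian Gram matrix of the rows of the generator matrix `G`.
A codeword `c ᵥ* G` is Hermitian-orthogonal to the code iff `c ᵥ* M = 0`, so the hull is the image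
of the left kernel of `M` under `c ↦ c ᵥ* G`.

Since `β_j = γ^δ ζ^(j+1)` for a primitive `k`-th root of unity `ζ` and `q ≡ 1 (mod k)`, the
evaluation part of `M r s` is `k γ^(δ(r+sq))` when `r + s ≡ 0 (mod k)` and `0` otherwise; the
columns coming from `A` only meet rows `r, s ≥ ℓ`. So outside the lower-right `ℓ × ℓ` block, `M`
is supported exactly on the cyclic antidiagonal, and the hypothesis on `A` says `M ℓ ℓ = 0`.
For such a matrix the columns `s < ℓ` force `c_0 = 0` and `c_r = 0` for `r > ℓ`, and then the
column `s > ℓ` expresses `c_(2ℓ-s)` through `c_ℓ`: the left kernel is a line. Its generator has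
`c_ℓ = 1`, so its codeword agrees with the first row of `A` on the last `ℓ` coordinates and is
nonzero because `A` is invertible.
-/

def hermitianGram {F : Type} [Field F] (q : ℕ) {κ ι : Type} [Fintype ι] (G : Matrix κ ι F) :
    Matrix κ κ F :=
  G * (G.map (· ^ q))ᵀ

theorem vecMul_hermitianGram_apply {F : Type} [Field F] (q : ℕ) {κ ι : Type} [Fintype κ]
    [Fintype ι] (G : Matrix κ ι F) (c : κ → F) (s : κ) :
    (c ᵥ* hermitianGram q G) s = ∑ i, (c ᵥ* G) i * G s i ^ q := by
  rw [hermitianGram, ← vecMul_vecMul, vecMul_transpose]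
  simp only [mulVec, dotProduct, map_apply, mul_comm]

section HermitianHull

variable {F : Type} [Field F] {p : ℕ} [ExpChar F p] (n : ℕ) {ι : Type} [Fintype ι]

theorem mem_dualH_span_iff (S : Set (ι → F)) (x : ι → F) :
    x ∈ dualH (p ^ n) (Submodule.span F S) ↔ ∀ y ∈ S, ∑ i, x i * y i ^ p ^ n = 0 := by
  refine ⟨fun hx y hy => hx y (Submodule.subset_span hy), fun hS y hy => ?_⟩
  induction hy using Submodule.span_induction with
  | mem y hy => exact hS y hy
  | zero => simp [zero_pow (expChar_pow_pos F p n).ne']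
  | add y z _ _ hy hz =>
    simp only [Pi.add_apply, add_pow_expChar_pow, mul_add, sum_add_distrib, hy, hz, add_zero]
  | smul a y _ hy =>
    simp only [Pi.smul_apply, smul_eq_mul, mul_pow, mul_left_comm _ (a ^ p ^ n), ← mul_sum, hy,
      mul_zero]

theorem inf_dualH_span_range_eq_map {κ : Type} [Fintype κ] (G : Matrix κ ι F) :
    Submodule.span F (Set.range G) ⊓ dualH (p ^ n) (Submodule.span F (Set.range G)) =
      (LinearMap.ker (hermitianGram (p ^ n) G).vecMulLinear).map G.vecMulLinear := by
  have hspan : Submodule.span F (Set.range G) = LinearMap.range G.vecMulLinear := by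
    rw [range_vecMulLinear]; rfl
  ext x
  rw [Submodule.mem_inf, mem_dualH_span_iff, Submodule.mem_map, hspan]
  simp only [LinearMap.mem_range, LinearMap.mem_ker, vecMulLinear_apply]
  constructor
  · rintro ⟨⟨c, rfl⟩, hc⟩
    exact ⟨c, funext fun s => (vecMul_hermitianGram_apply _ G c s).trans (hc _ ⟨s, rfl⟩), rfl⟩
  · rintro ⟨c, hc, rfl⟩
    exact ⟨⟨c, rfl⟩, fun _ ⟨s, hs⟩ =>
      hs ▸ (vecMul_hermitianGram_apply _ G c s).symm.trans (congrFun hc s)⟩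

end HermitianHull

theorem Nat.dvd_iff_eq_zero_or_eq_of_lt_two_mul {k a : ℕ} (ha : a < 2 * k) :
    k ∣ a ↔ a = 0 ∨ a = k := by
  constructor
  · rintro ⟨c, rfl⟩
    rcases c with _ | _ | c
    · simp
    · simp
    · nlinarith
  · rintro (rfl | rfl) <;> simp

theorem Nat.dvd_add_mul_iff_of_dvd_sub_one {k q : ℕ} (hq : q ≠ 0) (hkq : k ∣ q - 1) (r s : ℕ) :
    k ∣ r + s * q ↔ k ∣ r + s := by
  have h : r + s * q ≡ r + s * 1 [MOD k] :=
    ((((Nat.modEq_iff_dvd' (by omega)).2 hkq).mul_left s).add_left r).symm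
  rw [h.dvd_iff dvd_rfl, mul_one]

theorem Nat.cast_ne_zero_of_dvd_sub_one {R : Type} [Ring R] [Nontrivial R] {k q : ℕ}
    (hq : (q : R) = 0) (hq0 : q ≠ 0) (hk : k ∣ q - 1) : (k : R) ≠ 0 := by
  obtain ⟨t, ht⟩ := hk
  intro h
  have : ((q - 1 : ℕ) : R) = 0 := by rw [ht, Nat.cast_mul, h, zero_mul]
  rw [Nat.cast_sub (by omega), hq, Nat.cast_one, zero_sub, neg_eq_zero] at this
  exact one_ne_zero this

theorem isPrimitiveRoot_pow_div_of_forall_mem_zpowers {F : Type} [Field F] [Fintype F] {γ : Fˣ}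
    (hγ : ∀ x : Fˣ, x ∈ Subgroup.zpowers γ) {k : ℕ} (hk : k ∣ Fintype.card F - 1) :
    IsPrimitiveRoot ((γ : F) ^ ((Fintype.card F - 1) / k)) k := by
  have hpos : 0 < Fintype.card F - 1 := Nat.sub_pos_of_lt Fintype.one_lt_card
  have hγ' : IsPrimitiveRoot (γ : F) (Fintype.card F - 1) := by
    rw [IsPrimitiveRoot.coe_units_iff, ← Nat.card_eq_fintype_card, ← Nat.card_units,
      ← orderOf_eq_card_of_forall_mem_zpowers hγ]
    exact IsPrimitiveRoot.orderOf γ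
  have := hγ'.pow_of_dvd (Nat.div_pos (Nat.le_of_dvd hpos hk) (Nat.pos_of_dvd_of_pos hk hpos)).ne'
    (Nat.div_dvd_of_dvd hk)
  rwa [Nat.div_div_self hk hpos.ne'] at this

theorem IsPrimitiveRoot.sum_pow_succ_pow {F : Type} [Field F] {ζ : F} {k : ℕ}
    (hζ : IsPrimitiveRoot ζ k) (t : ℕ) :
    ∑ j : Fin k, (ζ ^ ((j : ℕ) + 1)) ^ t = if k ∣ t then (k : F) else 0 := by
  simp_rw [← pow_mul, mul_comm _ t, pow_mul]
  rw [Fin.sum_univ_eq_sum_range (fun j => (ζ ^ t) ^ (j + 1))]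
  split_ifs with h
  · simp [(hζ.pow_eq_one_iff_dvd t).2 h]
  · rw [← hζ.pow_eq_one_iff_dvd] at h
    have hk : (ζ ^ t) ^ k = 1 := by rw [← pow_mul, mul_comm, pow_mul, hζ.pow_eq_one, one_pow]
    simp_rw [pow_succ, ← sum_mul, geom_sum_eq h, hk, sub_self, zero_div, zero_mul]

theorem IsPrimitiveRoot.sum_pow_of_eq_mul_pow_succ {F : Type} [Field F] {k : ℕ} {ζ b : F}
    (hζ : IsPrimitiveRoot ζ k) {β : Fin k → F} (hβ : ∀ j, β j = b * ζ ^ ((j : ℕ) + 1)) (t : ℕ) :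
    ∑ j, β j ^ t = if k ∣ t then k * b ^ t else 0 := by
  simp_rw [hβ, mul_pow, ← mul_sum, hζ.sum_pow_succ_pow]
  split_ifs <;> ring

def IsCyclicAntidiagonalOffCorner {F : Type} [Field F] {k : ℕ} (M : Matrix (Fin k) (Fin k) F)
    (m : Fin k) : Prop :=
  ∀ r s : Fin k, ((r : ℕ) < m ∨ (s : ℕ) < m) → (M r s = 0 ↔ (r : ℕ) + s ≠ 0 ∧ (r : ℕ) + s ≠ k)

def antidiagKernelVec {F : Type} [Field F] {k : ℕ} (M : Matrix (Fin k) (Fin k) F) (m : Fin k) :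
    Fin k → F := fun r =>
  if r = m then 1
  else if h : 0 < (r : ℕ) ∧ (r : ℕ) < m then
    -M m ⟨k - r, Nat.sub_lt r.pos h.1⟩ / M r ⟨k - r, Nat.sub_lt r.pos h.1⟩
  else 0

section Antidiagonal

variable {F : Type} [Field F] {k : ℕ} {M : Matrix (Fin k) (Fin k) F} {m : Fin k}

theorem antidiagKernelVec_self : antidiagKernelVec M m m = 1 := if_pos rfl

theorem antidiagKernelVec_of_eq_zero_or_lt (hm : 0 < (m : ℕ)) {r : Fin k}
    (hr : (r : ℕ) = 0 ∨ m < r) :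
    antidiagKernelVec M m r = 0 := by
  have : r ≠ m := by rintro rfl; omega
  simp only [antidiagKernelVec, if_neg this, dif_neg (by omega : ¬(0 < (r : ℕ) ∧ (r : ℕ) < m))]

namespace IsCyclicAntidiagonalOffCorner

theorem apply_eq_zero_of_vecMul_eq_zero (hM : IsCyclicAntidiagonalOffCorner M m)
    (hk : k = 2 * m) {c : Fin k → F} (hc : c ᵥ* M = 0) {r : Fin k} (hr : (r : ℕ) = 0 ∨ m < r) :
    c r = 0 := by
  obtain ⟨s, hs, hrs⟩ : ∃ s : Fin k, (s : ℕ) < m ∧ ((r : ℕ) + s = 0 ∨ (r : ℕ) + s = k) := by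
    rcases hr with hr | hr
    · exact ⟨⟨0, by omega⟩, by simp; omega⟩
    · exact ⟨⟨k - r, by omega⟩, by simp; omega⟩
  have hsum : (c ᵥ* M) s = c r * M r s :=
    Fintype.sum_eq_single r fun r' hr' => mul_eq_zero_of_right _ <|
      (hM r' s (Or.inr hs)).2 (by have := Fin.val_injective.ne hr'; omega)
  have hMrs : M r s ≠ 0 := fun h => by have := (hM r s (Or.inr hs)).1 h; omega
  simpa [hc, hMrs] using hsum.symm

theorem eq_zero_of_vecMul_eq_zero (hM : IsCyclicAntidiagonalOffCorner M m)
    (hk : k = 2 * m) {c : Fin k → F} (hc : c ᵥ* M = 0) (hcm : c m = 0) : c = 0 := by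
  have hhigh : ∀ r : Fin k, m ≤ r → c r = 0 := fun r hr =>
    (eq_or_lt_of_le hr).elim (· ▸ hcm) fun h => hM.apply_eq_zero_of_vecMul_eq_zero hk hc (Or.inr h)
  funext r
  rcases lt_or_ge r m with hr | hr
  · rcases Nat.eq_zero_or_pos (r : ℕ) with h0 | hpos
    · exact hM.apply_eq_zero_of_vecMul_eq_zero hk hc (Or.inl h0)
    let s : Fin k := ⟨k - r, by omega⟩
    have hsum : (c ᵥ* M) s = c r * M r s := by
      refine Fintype.sum_eq_single r fun r' hr' => ?_
      rcases lt_or_ge r' m with h | h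
      · exact mul_eq_zero_of_right _ <|
          (hM r' s (Or.inl h)).2 (by have := Fin.val_injective.ne hr'; simp [s]; omega)
      · exact mul_eq_zero_of_left (hhigh r' h) _
    have hMrs : M r s ≠ 0 := fun h => by simpa [s] using ((hM r s (Or.inl hr)).1 h).2
    simpa [hc, hMrs] using hsum.symm
  · exact hhigh r hr

theorem vecMul_antidiagKernelVec (hM : IsCyclicAntidiagonalOffCorner M m) (hk : k = 2 * m)
    (hMm : M m m = 0) : antidiagKernelVec M m ᵥ* M = 0 := by
  have hm : 0 < (m : ℕ) := by have := m.pos; omega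
  funext s
  show ∑ r, antidiagKernelVec M m r * M r s = 0
  rcases le_or_gt s m with hs | hs
  · refine Finset.sum_eq_zero fun r _ => ?_
    by_cases hr : (r : ℕ) = 0 ∨ m < r
    · rw [antidiagKernelVec_of_eq_zero_or_lt hm hr, zero_mul]
    rcases eq_or_ne r m with rfl | hrm
    · rcases eq_or_lt_of_le hs with rfl | hs
      · rw [hMm, mul_zero]
      · exact mul_eq_zero_of_right _ <| (hM r s (Or.inr hs)).2 (by omega)
    · have : (r : ℕ) < m := by have := Fin.val_injective.ne hrm; omega
      exact mul_eq_zero_of_right _ <| (hM r s (Or.inl this)).2 (by omega)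
  · let r₀ : Fin k := ⟨k - s, by omega⟩
    have hr₀ : 0 < (r₀ : ℕ) ∧ (r₀ : ℕ) < m := by simp only [r₀]; omega
    have hs₀ : (⟨k - r₀, by omega⟩ : Fin k) = s := by ext; simp [r₀]; omega
    rw [Fintype.sum_eq_add r₀ m (Fin.ne_of_lt hr₀.2) fun r ⟨hr₁, hr₂⟩ => ?_]
    · have hMr₀ : M r₀ s ≠ 0 := fun h => by simpa [r₀] using ((hM r₀ s (Or.inl hr₀.2)).1 h).2
      simp only [antidiagKernelVec, if_neg (Fin.ne_of_lt hr₀.2), dif_pos hr₀, hs₀, if_true,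
        div_mul_cancel₀ _ hMr₀, neg_add_cancel, one_mul]
    by_cases hr : (r : ℕ) = 0 ∨ m < r
    · rw [antidiagKernelVec_of_eq_zero_or_lt hm hr, zero_mul]
    · have h₁ := Fin.val_injective.ne hr₁
      have h₂ := Fin.val_injective.ne hr₂
      exact mul_eq_zero_of_right _ <| (hM r s (Or.inl (by omega))).2 (by simp [r₀] at h₁; omega)

theorem ker_vecMulLinear_eq_span (hM : IsCyclicAntidiagonalOffCorner M m) (hk : k = 2 * m)
    (hMm : M m m = 0) :
    LinearMap.ker M.vecMulLinear = Submodule.span F {antidiagKernelVec M m} := by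
  have hc := hM.vecMul_antidiagKernelVec hk hMm
  refine le_antisymm (fun d hd => Submodule.mem_span_singleton.2 ⟨d m, ?_⟩) ?_
  · rw [LinearMap.mem_ker, vecMulLinear_apply] at hd
    refine (sub_eq_zero.1 (hM.eq_zero_of_vecMul_eq_zero hk ?_ ?_)).symm
    · rw [sub_vecMul, smul_vecMul, hd, hc, smul_zero, sub_zero]
    · simp [antidiagKernelVec_self]
  · rw [Submodule.span_le, Set.singleton_subset_iff]
    exact hc

end IsCyclicAntidiagonalOffCorner

end Antidiagonal

section GRL

variable {F : Type} [Field F] {k ℓ : ℕ} (hℓk : ℓ ≤ k) {ι : Type} (β : ι → F)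
  (A : Matrix (Fin ℓ) (Fin ℓ) F)

theorem GRLmatrix_inr_of_eq_add {r : Fin k} {i : Fin ℓ} (hr : (r : ℕ) = k - ℓ + i) (j : Fin ℓ) :
    GRLmatrix k ℓ hℓk β A r (Sum.inr j) = A i j := by
  simp only [GRLmatrix, Sum.elim_inr, dif_neg (by omega : ¬(r : ℕ) < k - ℓ)]
  congr
  omega

theorem hermitianGram_GRLmatrix [Fintype ι] (q : ℕ) (r s : Fin k) :
    hermitianGram q (GRLmatrix k ℓ hℓk β A) r s = ∑ j, β j ^ ((r : ℕ) + s * q) +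
      ∑ j, GRLmatrix k ℓ hℓk β A r (Sum.inr j) * GRLmatrix k ℓ hℓk β A s (Sum.inr j) ^ q := by
  simp only [hermitianGram, mul_apply, transpose_apply, map_apply, Fintype.sum_sum_type]
  simp only [GRLmatrix, Sum.elim_inl, ← pow_mul, ← pow_add]

theorem hermitianGram_GRLmatrix_of_lt [Fintype ι] {q : ℕ} (hq : q ≠ 0) {r s : Fin k}
    (h : (r : ℕ) < k - ℓ ∨ (s : ℕ) < k - ℓ) :
    hermitianGram q (GRLmatrix k ℓ hℓk β A) r s = ∑ j, β j ^ ((r : ℕ) + s * q) := by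
  rw [hermitianGram_GRLmatrix, add_eq_left]
  refine Finset.sum_eq_zero fun j _ => ?_
  rcases h with h | h
  · rw [GRLmatrix_inr_of_lt hℓk β A h, zero_mul]
  · rw [GRLmatrix_inr_of_lt hℓk β A h, zero_pow hq, mul_zero]

theorem vecMul_GRLmatrix_inr (hℓ : 0 < ℓ) {m : Fin k} (hm : (m : ℕ) = k - ℓ) {c : Fin k → F}
    (hcm : c m = 1) (hc : ∀ r, m < r → c r = 0) (j : Fin ℓ) :
    (c ᵥ* GRLmatrix k ℓ hℓk β A) (Sum.inr j) = A ⟨0, hℓ⟩ j := by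
  refine (Fintype.sum_eq_single m fun r hr => ?_).trans ?_
  · rcases lt_or_gt_of_ne hr with h | h
    · exact mul_eq_zero_of_right _ (GRLmatrix_inr_of_lt hℓk β A (by omega) j)
    · exact mul_eq_zero_of_left (hc r h) _
  · rw [hcm, one_mul]
    exact GRLmatrix_inr_of_eq_add hℓk β A hm j

end GRL

section CyclicGRL

variable {F : Type} [Field F] {k ℓ q : ℕ} (hℓk : ℓ ≤ k) (A : Matrix (Fin ℓ) (Fin ℓ) F)
  {β : Fin k → F} {ζ b : F}

theorem isCyclicAntidiagonalOffCorner_hermitianGram_GRLmatrix (hk : k = 2 * ℓ) (hq : q ≠ 0)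
    (hkq : k ∣ q - 1) (hkF : (k : F) ≠ 0) (hb : b ≠ 0) (hζ : IsPrimitiveRoot ζ k)
    (hβ : ∀ j, β j = b * ζ ^ ((j : ℕ) + 1)) {m : Fin k} (hm : (m : ℕ) = ℓ) :
    IsCyclicAntidiagonalOffCorner (hermitianGram q (GRLmatrix k ℓ hℓk β A)) m := by
  intro r s h
  rw [hermitianGram_GRLmatrix_of_lt hℓk β A hq (by omega), hζ.sum_pow_of_eq_mul_pow_succ hβ]
  simp only [Nat.dvd_add_mul_iff_of_dvd_sub_one hq hkq,
    Nat.dvd_iff_eq_zero_or_eq_of_lt_two_mul (by omega : (r : ℕ) + s < 2 * k)]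
  split_ifs with hrs
  · rw [iff_false_left (mul_ne_zero hkF (pow_ne_zero _ hb))]
    omega
  · simp only [true_iff]
    omega

theorem hermitianGram_GRLmatrix_self (hk : k = 2 * ℓ) (hℓ : 0 < ℓ) (hq : q ≠ 0)
    (hkq : k ∣ q - 1) (hζ : IsPrimitiveRoot ζ k) (hβ : ∀ j, β j = b * ζ ^ ((j : ℕ) + 1))
    {m : Fin k} (hm : (m : ℕ) = ℓ) :
    hermitianGram q (GRLmatrix k ℓ hℓk β A) m m =
      k * b ^ (ℓ + ℓ * q) + ∑ i, A ⟨0, hℓ⟩ i ^ (1 + q) := by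
  have hdvd : k ∣ ℓ + ℓ * q := by
    rw [Nat.dvd_add_mul_iff_of_dvd_sub_one hq hkq, ← two_mul, hk]
  rw [hermitianGram_GRLmatrix, hζ.sum_pow_of_eq_mul_pow_succ hβ, hm, if_pos hdvd]
  congr 1
  refine sum_congr rfl fun j _ => ?_
  rw [GRLmatrix_inr_of_eq_add hℓk _ A (i := ⟨0, hℓ⟩) (by simp only; omega), pow_add, pow_one]

end CyclicGRL

/-- with `k ∣ q - 1`, `β = (γ^δ·α_1, …, γ^δ·α_k)`, `k = 2ℓ` and
`k·γ^{δ(k-ℓ+ℓq)} + Σ a_{1i}^{1+q} = 0`, the Hermitian hull of the GRL code has dimension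
exactly `1`. -/
theorem stmt13 {F : Type} [Field F] [Fintype F]
    (q p m : ℕ) (hp : p.Prime) (hq : q = p ^ m)
    (hcard : Fintype.card F = q ^ 2)
    (γ : Fˣ) (hγ : ∀ x : Fˣ, x ∈ Subgroup.zpowers γ)
    (k ℓ : ℕ) (hℓ2 : 2 ≤ ℓ) (hℓk : ℓ ≤ k) (hkdvd : k ∣ q ^ 2 - 1)
    (A : Matrix (Fin ℓ) (Fin ℓ) F) (hA : IsUnit A.det)
    (α : Fin k → F)
    (hα : ∀ i : Fin k, α i = (γ : F) ^ ((q ^ 2 - 1) / k * ((i : ℕ) + 1)))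
    (hkq : k ∣ q - 1)
    (δ : ℕ)
    (β : Fin k → F) (hβ : ∀ i, β i = (γ : F) ^ δ * α i)
    (hk2ℓ : k = 2 * ℓ)
    (hzero : (k : F) * (γ : F) ^ (δ * (k - ℓ + ℓ * q)) +
      ∑ i : Fin ℓ, A ⟨0, by omega⟩ i ^ (1 + q) = 0) :
    Module.finrank F ↥(GRLcode k ℓ hℓk β A ⊓ dualH q (GRLcode k ℓ hℓk β A)) = 1 := by
  have hℓ : 0 < ℓ := by omega
  let mid : Fin k := ⟨ℓ, by omega⟩
  have hq0 : q ≠ 0 := by rintro rfl; simp at hcard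
  have hkF : (k : F) ≠ 0 := Nat.cast_ne_zero_of_dvd_sub_one
    (pow_eq_zero_iff two_ne_zero |>.1 (by rw [← Nat.cast_pow, ← hcard, Nat.cast_card_eq_zero]))
    hq0 hkq
  have hζ := hcard ▸ isPrimitiveRoot_pow_div_of_forall_mem_zpowers hγ (hcard ▸ hkdvd)
  have hβζ (j : Fin k) : β j = (γ : F) ^ δ * ((γ : F) ^ ((q ^ 2 - 1) / k)) ^ ((j : ℕ) + 1) := by
    rw [hβ, hα, pow_mul]
  have hM := isCyclicAntidiagonalOffCorner_hermitianGram_GRLmatrix hℓk A hk2ℓ hq0 hkq hkF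
    (pow_ne_zero _ γ.ne_zero) hζ hβζ (m := mid) rfl
  have hMm : hermitianGram q (GRLmatrix k ℓ hℓk β A) mid mid = 0 := by
    rw [hermitianGram_GRLmatrix_self hℓk A hk2ℓ hℓ hq0 hkq hζ hβζ rfl, ← pow_mul, ← hzero,
      show k - ℓ = ℓ by omega]
  have hw : antidiagKernelVec (hermitianGram q (GRLmatrix k ℓ hℓk β A)) mid ᵥ*
      GRLmatrix k ℓ hℓk β A ≠ 0 := fun hw =>
    hA.ne_zero <| det_eq_zero_of_row_eq_zero ⟨0, hℓ⟩ fun j => by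
      rw [← vecMul_GRLmatrix_inr hℓk β A hℓ (m := mid) (show ℓ = k - ℓ by omega)
        antidiagKernelVec_self (fun r hr => antidiagKernelVec_of_eq_zero_or_lt hℓ (Or.inr hr)) j,
        hw, Pi.zero_apply]
  subst hq
  have : Fact p.Prime := ⟨hp⟩
  have : CharP F p := charP_of_card_eq_prime_pow (f := m * 2) (by rw [hcard, pow_mul])
  rw [GRLcode, inf_dualH_span_range_eq_map, hM.ker_vecMulLinear_eq_span hk2ℓ hMm,
    Submodule.map_span, Set.image_singleton]
  exact finrank_span_singleton hw
end
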